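/- Let A be a residuated lattice, F a filter of A, and P a prime filter of A. Then D_F(P) = ⋂{m | m is an F-minimal prime filter of A and m ⊆ P} (where the intersection over the empty family is A). -/

import Mathlib

class ResiduatedLattice (α : Type*) extends Lattice α, CommMonoid α, BoundedOrder α where
  rimp : α → α → α
  one_eq_top : (1 : α) = ⊤
  adjunction : ∀ x y z : α, x * y ≤ z ↔ x ≤ rimp y z

variable {α : Type*} [ResiduatedLattice α]

/-- A filter of a residuated lattice: nonempty, closed under `⊙` and upward closed. -/
def IsFilter (F : Set α) : Prop :=
  F.Nonempty ∧ (∀ x ∈ F, ∀ y ∈ F, x * y ∈ F) ∧ ∀ x ∈ F, ∀ y : α, x ≤ y → y ∈ F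

/-- A prime filter: a proper filter such that `x ⊔ y ∈ P` implies `x ∈ P` or `y ∈ P`. -/
def IsPrimeFilter (P : Set α) : Prop :=
  IsFilter P ∧ P ≠ Set.univ ∧ ∀ x y : α, x ⊔ y ∈ P → x ∈ P ∨ y ∈ P

/-- A `∨`-closed subset: nonempty and closed under join. -/
def IsJoinClosed (C : Set α) : Prop :=
  C.Nonempty ∧ ∀ x ∈ C, ∀ y ∈ C, x ⊔ y ∈ C

/-- The filter generated by a set. -/
def filterGen (X : Set α) : Set α := ⋂₀ {G : Set α | IsFilter G ∧ X ⊆ G}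

/-- An `X`-minimal prime filter: prime, contains `X`, minimal among primes containing `X`. -/
def IsMinPrimeOver (X P : Set α) : Prop :=
  IsPrimeFilter P ∧ X ⊆ P ∧ ∀ Q : Set α, IsPrimeFilter Q → X ⊆ Q → Q ⊆ P → Q = P

/-- `ω_F(X) = {a | x ∨ a ∈ F for some x ∈ X}`. -/
def omegaF (F X : Set α) : Set α := {a : α | ∃ x ∈ X, x ⊔ a ∈ F}

/-- The coannihilator `(F : x) = {a | x ∨ a ∈ F}`. -/
def coann (F : Set α) (x : α) : Set α := {a : α | x ⊔ a ∈ F}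

/-- `D_F(H) = {a | x ∨ a ∈ F for some x ∉ H}`, the set of `F`-divisors of `H`. -/
def divisorsF (F H : Set α) : Set α := {a : α | ∃ x ∉ H, x ⊔ a ∈ F}

/-- A lattice ideal: nonempty, closed under join and downward closed. -/
def IsLatticeIdeal (I : Set α) : Prop :=
  I.Nonempty ∧ (∀ x ∈ I, ∀ y ∈ I, x ⊔ y ∈ I) ∧ ∀ x y : α, x ≤ y → y ∈ I → x ∈ I

/-- The lattice ideal generated by a set. -/
def idealGen (X : Set α) : Set α := ⋂₀ {I : Set α | IsLatticeIdeal I ∧ X ⊆ I}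

/-- An `ω_F`-filter: a filter of the form `ω_F(I)` for some lattice ideal `I`. -/
def IsOmegaFilter (F H : Set α) : Prop :=
  IsFilter H ∧ ∃ I : Set α, IsLatticeIdeal I ∧ H = omegaF F I

/-!
If `x ∉ P` and `x ⊔ a ∈ F`, every prime filter `m` with `F ⊆ m ⊆ P` contains `x ⊔ a` but not `x`,
hence contains `a`. Conversely, if `a ∉ D_F(P)`, the filter `(F : a)` is disjoint from the
`∨`-closed set `{a ⊔ x | x ∉ P}`, so it extends to a prime filter `Q` disjoint from that set;
then `F ⊆ Q ⊆ P` and `a ∉ Q`, and by Zorn's lemma `Q` contains an `F`-minimal prime filter,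
which misses `a`. The prime extension is a maximal filter disjoint from the `∨`-closed set; its
primality rests on `(x ⊔ y)ⁿ ≤ xⁿ ⊔ y`.
-/

namespace ResiduatedLattice

theorem galoisConnection_mul_rimp (x : α) : GaloisConnection (· * x) (rimp x) :=
  fun y z => adjunction y x z

instance : IsOrderedMonoid α where
  mul_le_mul_left _ _ h c := (galoisConnection_mul_rimp c).monotone_l h

theorem le_one (x : α) : x ≤ 1 := one_eq_top (α := α) ▸ le_top

protected theorem sup_mul (x y z : α) : (x ⊔ y) * z = x * z ⊔ y * z :=
  (galoisConnection_mul_rimp z).l_sup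

protected theorem mul_sup (x y z : α) : x * (y ⊔ z) = x * y ⊔ x * z := by
  simp only [mul_comm x, ResiduatedLattice.sup_mul]

theorem sup_pow_le (x y : α) (n : ℕ) : (x ⊔ y) ^ n ≤ x ^ n ⊔ y := by
  induction n with
  | zero => simp only [pow_zero, le_sup_left]
  | succ n ih =>
    calc (x ⊔ y) ^ (n + 1) = (x ⊔ y) ^ n * (x ⊔ y) := pow_succ _ _
      _ ≤ (x ^ n ⊔ y) * (x ⊔ y) := by gcongr
      _ = x ^ (n + 1) ⊔ y * x ⊔ (x ^ n ⊔ y) * y := by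
        rw [ResiduatedLattice.mul_sup, ResiduatedLattice.sup_mul, pow_succ]
      _ ≤ x ^ (n + 1) ⊔ y :=
        sup_le (sup_le_sup_left (mul_le_of_le_one_right' (le_one x)) _)
          (le_sup_of_le_right (mul_le_of_le_one_left' (le_one _)))

theorem sup_mul_sup_le (a x y : α) : (a ⊔ x) * (a ⊔ y) ≤ a ⊔ x * y :=
  calc (a ⊔ x) * (a ⊔ y) = (a ⊔ x) * a ⊔ (a * y ⊔ x * y) := by
        rw [ResiduatedLattice.mul_sup, ResiduatedLattice.sup_mul a x y]
    _ ≤ a ⊔ (a ⊔ x * y) :=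
      sup_le_sup (mul_le_of_le_one_left' (le_one _))
        (sup_le_sup_right (mul_le_of_le_one_right' (le_one y)) _)
    _ = a ⊔ x * y := sup_left_idem _ _

end ResiduatedLattice

open ResiduatedLattice

namespace IsFilter

variable {F : Set α}

theorem mul_mem (hF : IsFilter F) {x y : α} (hx : x ∈ F) (hy : y ∈ F) : x * y ∈ F :=
  hF.2.1 x hx y hy

theorem mem_of_le (hF : IsFilter F) {x y : α} (hx : x ∈ F) (hxy : x ≤ y) : y ∈ F :=
  hF.2.2 x hx y hxy

theorem one_mem (hF : IsFilter F) : (1 : α) ∈ F :=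
  let ⟨x, hx⟩ := hF.1
  hF.mem_of_le hx (le_one x)

theorem pow_mem (hF : IsFilter F) {x : α} (hx : x ∈ F) (n : ℕ) : x ^ n ∈ F := by
  induction n with
  | zero => exact pow_zero x ▸ hF.one_mem
  | succ n ih => exact pow_succ x n ▸ hF.mul_mem ih hx

theorem pow_sup_pow_mem (hF : IsFilter F) {x y : α} (h : x ⊔ y ∈ F) (m n : ℕ) :
    x ^ m ⊔ y ^ n ∈ F := by
  have h' : y ⊔ x ^ m ∈ F :=
    hF.mem_of_le (hF.pow_mem h m) ((sup_pow_le x y m).trans_eq (sup_comm _ _))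
  exact hF.mem_of_le (hF.pow_mem h' n) ((sup_pow_le y (x ^ m) n).trans_eq (sup_comm _ _))

theorem subset_coann (hF : IsFilter F) (a : α) : F ⊆ coann F a :=
  fun _ hx => hF.mem_of_le hx le_sup_right

theorem coann (hF : IsFilter F) (a : α) : IsFilter (coann F a) :=
  ⟨⟨1, hF.subset_coann a hF.one_mem⟩,
    fun x hx y hy => hF.mem_of_le (hF.mul_mem hx hy) (sup_mul_sup_le a x y),
    fun _ hx _ hxy => hF.mem_of_le hx (sup_le_sup_left hxy a)⟩

end IsFilter

/-- The filter generated by `M ∪ {e}` when `M` is a filter. -/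
def filterAdjoin (M : Set α) (e : α) : Set α := {z | ∃ q ∈ M, ∃ n : ℕ, q * e ^ n ≤ z}

section filterAdjoin

variable {M : Set α}

theorem subset_filterAdjoin (e : α) : M ⊆ filterAdjoin M e :=
  fun q hq => ⟨q, hq, 0, by rw [pow_zero, mul_one]⟩

theorem mem_filterAdjoin_self (hM : IsFilter M) (e : α) : e ∈ filterAdjoin M e :=
  ⟨1, hM.one_mem, 1, by rw [pow_one, one_mul]⟩

theorem IsFilter.filterAdjoin (hM : IsFilter M) (e : α) : IsFilter (filterAdjoin M e) := by
  refine ⟨⟨e, mem_filterAdjoin_self hM e⟩, ?_, ?_⟩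
  · rintro _ ⟨q₁, hq₁, n₁, h₁⟩ _ ⟨q₂, hq₂, n₂, h₂⟩
    refine ⟨q₁ * q₂, hM.mul_mem hq₁ hq₂, n₁ + n₂, ?_⟩
    rw [pow_add, mul_mul_mul_comm]
    exact mul_le_mul' h₁ h₂
  · rintro _ ⟨q, hq, n, h⟩ _ hle
    exact ⟨q, hq, n, h.trans hle⟩

end filterAdjoin

section PrimeFilters

variable {F J : Set α}

theorem IsPrimeFilter.mem_or_mem {P : Set α} (hP : IsPrimeFilter P) {x y : α}
    (h : x ⊔ y ∈ P) : x ∈ P ∨ y ∈ P :=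
  hP.2.2 x y h

theorem isPrimeFilter_of_maximal (hJ : IsJoinClosed J) {M : Set α}
    (hM : Maximal (fun Q => IsFilter Q ∧ Disjoint Q J) M) : IsPrimeFilter M := by
  obtain ⟨hMF, hMJ⟩ := hM.prop
  have meets : ∀ e ∉ M, ∃ q ∈ M, ∃ n : ℕ, ∃ j ∈ J, q * e ^ n ≤ j := by
    intro e he
    by_contra! h
    refine he (hM.le_of_ge ⟨hMF.filterAdjoin e, Set.disjoint_left.2 ?_⟩
      (subset_filterAdjoin e) (mem_filterAdjoin_self hMF e))
    rintro z ⟨q, hq, n, hz⟩ hzJ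
    exact h q hq n z hzJ hz
  refine ⟨hMF, fun h => hJ.1.ne_empty (Set.univ_disjoint.1 (h ▸ hMJ)), fun x y hxy => ?_⟩
  by_contra! h
  obtain ⟨q₁, hq₁, m, j₁, hj₁, h₁⟩ := meets x h.1
  obtain ⟨q₂, hq₂, n, j₂, hj₂, h₂⟩ := meets y h.2
  have hle : q₁ * q₂ * (x ^ m ⊔ y ^ n) ≤ j₁ ⊔ j₂ := by
    rw [ResiduatedLattice.mul_sup, mul_right_comm q₁ q₂, mul_assoc q₁ q₂]
    exact sup_le_sup ((mul_le_of_le_one_right' (le_one q₂)).trans h₁)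
      ((mul_le_of_le_one_left' (le_one q₁)).trans h₂)
  have hmem : q₁ * q₂ * (x ^ m ⊔ y ^ n) ∈ M :=
    hMF.mul_mem (hMF.mul_mem hq₁ hq₂) (hMF.pow_sup_pow_mem hxy m n)
  exact Set.disjoint_left.1 hMJ (hMF.mem_of_le hmem hle) (hJ.2 _ hj₁ _ hj₂)

theorem isFilter_sUnion_of_isChain {c : Set (Set α)} (hc : ∀ Q ∈ c, IsFilter Q)
    (hchain : IsChain (· ⊆ ·) c) (hne : c.Nonempty) : IsFilter (⋃₀ c) := by
  obtain ⟨Q, hQ⟩ := hne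
  refine ⟨⟨1, Q, hQ, (hc Q hQ).one_mem⟩, ?_, ?_⟩
  · rintro x ⟨Q₁, hQ₁, hx⟩ y ⟨Q₂, hQ₂, hy⟩
    rcases hchain.total hQ₁ hQ₂ with h | h
    · exact ⟨Q₂, hQ₂, (hc Q₂ hQ₂).mul_mem (h hx) hy⟩
    · exact ⟨Q₁, hQ₁, (hc Q₁ hQ₁).mul_mem hx (h hy)⟩
  · rintro x ⟨Q₁, hQ₁, hx⟩ y hxy
    exact ⟨Q₁, hQ₁, (hc Q₁ hQ₁).mem_of_le hx hxy⟩

theorem exists_isPrimeFilter_of_disjoint {G : Set α} (hG : IsFilter G) (hJ : IsJoinClosed J)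
    (hGJ : Disjoint G J) : ∃ Q, IsPrimeFilter Q ∧ G ⊆ Q ∧ Disjoint Q J := by
  obtain ⟨M, hGM, hM⟩ := zorn_subset_nonempty {Q | IsFilter Q ∧ Disjoint Q J}
    (fun c hcS hchain hne => ⟨⋃₀ c,
      ⟨isFilter_sUnion_of_isChain (fun Q hQ => (hcS hQ).1) hchain hne,
        Set.disjoint_sUnion_left.2 fun Q hQ => (hcS hQ).2⟩,
      fun _ => Set.subset_sUnion_of_mem⟩) G ⟨hG, hGJ⟩
  exact ⟨M, isPrimeFilter_of_maximal hJ hM, hGM, hM.prop.2⟩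

theorem isPrimeFilter_sInter_of_isChain {c : Set (Set α)} (hc : ∀ Q ∈ c, IsPrimeFilter Q)
    (hchain : IsChain (· ⊆ ·) c) (hne : c.Nonempty) : IsPrimeFilter (⋂₀ c) := by
  obtain ⟨Q, hQ⟩ := hne
  refine ⟨⟨⟨1, fun R hR => (hc R hR).1.one_mem⟩,
    fun x hx y hy R hR => (hc R hR).1.mul_mem (hx R hR) (hy R hR),
    fun x hx y hxy R hR => (hc R hR).1.mem_of_le (hx R hR) hxy⟩,
    fun h => (hc Q hQ).2.1 (Set.eq_univ_of_univ_subset (h ▸ Set.sInter_subset_of_mem hQ)),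
    fun x y hxy => ?_⟩
  by_contra! h
  simp only [Set.mem_sInter, not_forall] at h
  obtain ⟨⟨R₁, hR₁, hx⟩, ⟨R₂, hR₂, hy⟩⟩ := h
  rcases hchain.total hR₁ hR₂ with h | h
  · exact ((hc R₁ hR₁).mem_or_mem (hxy R₁ hR₁)).elim hx fun hy' => hy (h hy')
  · exact ((hc R₂ hR₂).mem_or_mem (hxy R₂ hR₂)).elim (fun hx' => hx (h hx')) hy

theorem exists_isMinPrimeOver_subset {Q : Set α} (hQ : IsPrimeFilter Q) (hFQ : F ⊆ Q) :
    ∃ m, IsMinPrimeOver F m ∧ m ⊆ Q := by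
  obtain ⟨m, hmQ, hm⟩ := zorn_superset_nonempty {R | IsPrimeFilter R ∧ F ⊆ R}
    (fun c hcS hchain hne => ⟨⋂₀ c,
      ⟨isPrimeFilter_sInter_of_isChain (fun R hR => (hcS hR).1) hchain hne,
        Set.subset_sInter fun R hR => (hcS hR).2⟩,
      fun _ => Set.sInter_subset_of_mem⟩) Q ⟨hQ, hFQ⟩
  refine ⟨m, ⟨hm.prop.1, hm.prop.2, fun R hR hFR hRm => ?_⟩, hmQ⟩
  exact hRm.antisymm (hm.le_of_le ⟨hR, hFR⟩ hRm)

end PrimeFilters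

section Divisors

variable {F P : Set α}

theorem divisorsF_subset {m : Set α} (hm : IsPrimeFilter m) (hFm : F ⊆ m) (hmP : m ⊆ P) :
    divisorsF F P ⊆ m :=
  fun _ ⟨_, hx, hxa⟩ => (hm.mem_or_mem (hFm hxa)).resolve_left fun h => hx (hmP h)

theorem exists_isPrimeFilter_of_notMem_divisorsF (hF : IsFilter F) (hP : IsPrimeFilter P)
    {a : α} (ha : a ∉ divisorsF F P) : ∃ Q, IsPrimeFilter Q ∧ F ⊆ Q ∧ Q ⊆ P ∧ a ∉ Q := by
  obtain ⟨x₀, hx₀⟩ := Set.ne_univ_iff_exists_notMem P |>.1 hP.2.1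
  have hJ : IsJoinClosed ((a ⊔ ·) '' Pᶜ) := by
    refine ⟨⟨a ⊔ x₀, x₀, hx₀, rfl⟩, ?_⟩
    rintro _ ⟨x, hx, rfl⟩ _ ⟨y, hy, rfl⟩
    exact ⟨x ⊔ y, fun hxy => (hP.mem_or_mem hxy).elim hx hy, sup_sup_distrib_left a x y⟩
  have hGJ : Disjoint (coann F a) ((a ⊔ ·) '' Pᶜ) := by
    refine Set.disjoint_left.2 ?_
    rintro _ hax ⟨x, hx, rfl⟩
    change a ⊔ (a ⊔ x) ∈ F at hax
    exact ha ⟨x, hx, by rwa [sup_left_idem, sup_comm] at hax⟩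
  obtain ⟨Q, hQ, hGQ, hQJ⟩ := exists_isPrimeFilter_of_disjoint (hF.coann a) hJ hGJ
  refine ⟨Q, hQ, (hF.subset_coann a).trans hGQ, fun q hq => ?_, fun haQ => ?_⟩
  · by_contra hqP
    exact Set.disjoint_left.1 hQJ (hQ.1.mem_of_le hq le_sup_right) ⟨q, hqP, rfl⟩
  · exact Set.disjoint_left.1 hQJ (hQ.1.mem_of_le haQ le_sup_left) ⟨x₀, hx₀, rfl⟩

end Divisors

/-- Corollary 3.21: `D_F(P)` is the intersection of the `F`-minimal prime
filters contained in `P`. -/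
theorem stmt_14 (F P : Set α) (hF : IsFilter F) (hP : IsPrimeFilter P) :
    divisorsF F P = ⋂₀ {m : Set α | IsMinPrimeOver F m ∧ m ⊆ P} := by
  refine Set.Subset.antisymm
    (Set.subset_sInter fun m ⟨hm, hmP⟩ => divisorsF_subset hm.1 hm.2.1 hmP) fun a ha => ?_
  by_contra h
  obtain ⟨Q, hQ, hFQ, hQP, haQ⟩ := exists_isPrimeFilter_of_notMem_divisorsF hF hP h
  obtain ⟨m, hm, hmQ⟩ := exists_isMinPrimeOver_subset hQ hFQ
  exact haQ (hmQ (ha m ⟨hm, hmQ.trans hQP⟩))
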